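/- arXiv:1010.0881 — 2 statements merged into one kernel-verified Lean document; each statement's English description precedes it below -/
import Mathlib

section
/- A self-similar set A in ℝⁿ that affinely spans ℝⁿ has no tangent hyperplane at any of its points: for every x ∈ A and every hyperplane V through x, there exists δ > 0 such that for every ε > 0 there is a point b ∈ A with 0 < |x−b| < ε and dist(b,V)/|x−b| ≥ δ. -/
/-!
Composing the generating similarities gives similarities `g` of arbitrarily small ratio `ρ` with
`g '' A ⊆ A` and `x = g y` for some `y ∈ A`. A similarity of a Euclidean space is `ρ` times an
affine isometry, so `g` pulls the hyperplane through `x` with unit normal `u` back to a hyperplane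
through `y` with unit normal `u'`. As `A` is compact and lies in no hyperplane, some `a ∈ A` is at
distance at least a uniform `c > 0` from it; then `b = g a` satisfies `|x - b| ≤ ρ diam A` and
`dist(b, V) ≥ ρ c`.
-/

open scoped RealInnerProductSpace
open Filter Topology

section InnerProductSpace

variable {E : Type*} [NormedAddCommGroup E] [InnerProductSpace ℝ E]

theorem exists_norm_eq_one_inner_sub_eq [FiniteDimensional ℝ E] {g : E → E} {ρ : ℝ} (hρ : 0 < ρ)
    (hg : ∀ a b, dist (g a) (g b) = ρ * dist a b) {u : E} (hu : ‖u‖ = 1) :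
    ∃ u' : E, ‖u'‖ = 1 ∧ ∀ a y, ⟪u, g a - g y⟫ = ρ * ⟪u', a - y⟫ := by
  have hiso : Isometry (ρ⁻¹ • g) := Isometry.of_dist_eq fun a b => by
    simp only [Pi.smul_apply, dist_smul₀, hg, Real.norm_eq_abs, abs_inv, abs_of_pos hρ,
      inv_mul_cancel_left₀ hρ.ne']
  let L := hiso.affineIsometryOfStrictConvexSpace.linearIsometry.toLinearIsometryEquiv rfl
  refine ⟨L.symm u, by rw [L.symm.norm_map, hu], fun a y => ?_⟩
  have hL : g a - g y = ρ • L (a - y) := by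
    rw [LinearIsometry.toLinearIsometryEquiv_apply, ← vsub_eq_sub a y, AffineIsometry.map_vsub]
    simp [smul_sub, smul_smul, hρ.ne']
  rw [hL, real_inner_smul_right, ← L.inner_map_map (L.symm u), L.apply_symm_apply]

theorem abs_inner_sub_le_infDist {u : E} (hu : ‖u‖ ≤ 1) (x b : E) :
    |⟪u, b - x⟫| ≤ Metric.infDist b {v | ⟪u, v - x⟫ = 0} := by
  refine (Metric.le_infDist ⟨x, by simp⟩).2 fun v (hv : ⟪u, v - x⟫ = 0) => ?_
  calc |⟪u, b - x⟫| = |⟪u, b - v⟫| := by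
        rw [← sub_add_sub_cancel b v x, inner_add_right, hv, add_zero]
    _ ≤ ‖u‖ * ‖b - v‖ := abs_real_inner_le_norm u _
    _ ≤ dist b v := by rw [dist_eq_norm]; exact mul_le_of_le_one_left (norm_nonneg _) hu

theorem IsCompact.exists_pos_le_abs_inner_sub [ProperSpace E] {A : Set E} (hA : IsCompact A)
    (hspan : ∀ u y : E, ‖u‖ = 1 → ¬ A ⊆ {x | ⟪u, x - y⟫ = 0}) :
    ∃ c > (0 : ℝ), ∀ u y : E, ‖u‖ = 1 → y ∈ A → ∃ a ∈ A, c ≤ |⟪u, a - y⟫| := by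
  have hK : IsCompact (Metric.sphere (0 : E) 1 ×ˢ A) := (isCompact_sphere 0 1).prod hA
  -- `z.1` is a candidate width; compactness of the unit sphere times `A` makes a positive one
  -- work at every point at once.
  have hlocal : ∀ p ∈ Metric.sphere (0 : E) 1 ×ˢ A, ∀ᶠ z : ℝ × (E × E) in 𝓝 (0, p),
      ∃ a ∈ A, z.1 < |⟪z.2.1, a - z.2.2⟫| := by
    rintro ⟨u, y⟩ ⟨hu, -⟩
    obtain ⟨a, ha, hne⟩ := Set.not_subset.1 (hspan u y (mem_sphere_zero_iff_norm.1 hu))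
    have hcont : Continuous fun z : ℝ × (E × E) => |⟪z.2.1, a - z.2.2⟫| := by fun_prop
    exact (continuous_fst.continuousAt.eventually_lt hcont.continuousAt
      (abs_pos.2 hne)).mono fun z hz => ⟨a, ha, hz⟩
  have huniform : ∀ᶠ c in 𝓝 (0 : ℝ), ∀ p ∈ Metric.sphere (0 : E) 1 ×ˢ A,
      ∃ a ∈ A, c < |⟪p.1, a - p.2⟫| :=
    hK.eventually_forall_of_forall_eventually (P := fun c p => ∃ a ∈ A, c < |⟪p.1, a - p.2⟫|)
      hlocal
  obtain ⟨c, hc, hc0⟩ := (huniform.filter_mono nhdsWithin_le_nhds).and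
    (self_mem_nhdsWithin (s := Set.Ioi (0 : ℝ))) |>.exists
  exact ⟨c, hc0, fun u y hu hy => (hc (u, y) ⟨mem_sphere_zero_iff_norm.2 hu, hy⟩).imp
    fun a ⟨ha, hlt⟩ => ⟨ha, hlt.le⟩⟩

end InnerProductSpace

theorem exists_similarity_of_eq_iUnion_image {X ι : Type*} [PseudoMetricSpace X] {f : ι → X → X}
    {r : ι → ℝ} {R : ℝ} {A : Set X} (hr : ∀ i, 0 < r i) (hrR : ∀ i, r i ≤ R)
    (hsim : ∀ i a b, dist (f i a) (f i b) = r i * dist a b) (hself : A = ⋃ i, f i '' A)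
    {x : X} (hx : x ∈ A) (k : ℕ) :
    ∃ (g : X → X) (ρ : ℝ), 0 < ρ ∧ ρ ≤ R ^ k ∧ (∀ a b, dist (g a) (g b) = ρ * dist a b) ∧
      Set.MapsTo g A A ∧ x ∈ g '' A := by
  induction k with
  | zero => exact ⟨id, 1, one_pos, by simp, by simp, Set.mapsTo_id A, by simpa⟩
  | succ k ih =>
    obtain ⟨g, ρ, hρ, hρR, hg, hgA, y, hy, rfl⟩ := ih
    obtain ⟨i, z, hz, rfl⟩ := Set.mem_iUnion.1 (hself ▸ hy)
    refine ⟨g ∘ f i, ρ * r i, mul_pos hρ (hr i), ?_, fun a b => ?_, ?_, z, hz, rfl⟩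
    · rw [pow_succ]
      exact mul_le_mul hρR (hrR i) (hr i).le (hρ.le.trans hρR)
    · simp only [Function.comp_apply, hg, hsim, mul_assoc]
    · refine hgA.comp fun a ha => ?_
      rw [hself]
      exact Set.mem_iUnion.2 ⟨i, a, ha, rfl⟩

theorem stmt_2_general (n m : ℕ) (hm : 0 < m)
    (f : Fin m → EuclideanSpace ℝ (Fin n) → EuclideanSpace ℝ (Fin n))
    (r : Fin m → ℝ) (hr : ∀ i, 0 < r i ∧ r i < 1)
    (hsim : ∀ i x y, dist (f i x) (f i y) = r i * dist x y)
    (A : Set (EuclideanSpace ℝ (Fin n))) (hAcomp : IsCompact A)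
    (hself : A = ⋃ i, f i '' A)
    (hspan : ∀ (u y : EuclideanSpace ℝ (Fin n)), ‖u‖ = 1 →
      ¬ A ⊆ {x | ⟪u, x - y⟫ = 0}) :
    ∀ x ∈ A, ∀ u : EuclideanSpace ℝ (Fin n), ‖u‖ = 1 →
      ∃ δ > (0 : ℝ), ∀ ε > (0 : ℝ), ∃ b ∈ A, 0 < dist x b ∧ dist x b < ε ∧
        δ * dist x b ≤ Metric.infDist b {v | ⟪u, v - x⟫ = 0} := by
  intro x hx u hu
  have : Nonempty (Fin m) := ⟨⟨0, hm⟩⟩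
  obtain ⟨i₀, hi₀⟩ := Finite.exists_max r
  obtain ⟨c, hc, hwidth⟩ := hAcomp.exists_pos_le_abs_inner_sub hspan
  set M := Metric.diam A + 1
  have hM : 0 < M := by positivity
  refine ⟨c / M, by positivity, fun ε hε => ?_⟩
  obtain ⟨k, hk⟩ := exists_pow_lt_of_lt_one (div_pos hε hM) (hr i₀).2
  obtain ⟨g, ρ, hρ, hρk, hg, hgA, y, hy, rfl⟩ :=
    exists_similarity_of_eq_iUnion_image (fun i => (hr i).1) hi₀ hsim hself hx k
  obtain ⟨u', hu', hgu⟩ := exists_norm_eq_one_inner_sub_eq hρ hg hu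
  obtain ⟨a, ha, hca⟩ := hwidth u' y hu' hy
  have hfar : ρ * c ≤ Metric.infDist (g a) {v | ⟪u, v - g y⟫ = 0} := calc
    ρ * c ≤ |⟪u, g a - g y⟫| := by rw [hgu, abs_mul, abs_of_pos hρ]; gcongr
    _ ≤ _ := abs_inner_sub_le_infDist hu.le (g y) (g a)
  have hnear : dist (g y) (g a) ≤ ρ * M := by
    rw [hg]
    gcongr
    exact (Metric.dist_le_diam_of_mem hAcomp.isBounded hy ha).trans
      (le_add_of_nonneg_right zero_le_one)
  refine ⟨g a, hgA ha, ?_, ?_, ?_⟩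
  · calc 0 < ρ * c := by positivity
      _ ≤ _ := hfar
      _ ≤ dist (g a) (g y) := Metric.infDist_le_dist_of_mem (by simp)
      _ = dist (g y) (g a) := dist_comm _ _
  · calc dist (g y) (g a) ≤ ρ * M := hnear
      _ ≤ r i₀ ^ k * M := by gcongr
      _ < ε := (lt_div_iff₀ hM).1 hk
  · calc c / M * dist (g y) (g a) ≤ c / M * (ρ * M) := by gcongr
      _ = ρ * c := by field_simp
      _ ≤ _ := hfar

/-- Theorem 1 (i): a self-similar set `A ⊆ ℝⁿ` (attractor of contracting similarities
`f i` with ratios `r i ∈ (0,1)`) which is not contained in any affine hyperplane has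
no tangent hyperplane at any of its points: for every `x ∈ A` and every hyperplane `V`
through `x` (unit normal `u`), there is `δ > 0` such that for every `ε > 0` there is
`b ∈ A` with `0 < |x - b| < ε` and `dist(b, V) ≥ δ·|x - b|`. -/
theorem stmt_2 (n m : ℕ) (hm : 0 < m)
    (f : Fin m → EuclideanSpace ℝ (Fin n) → EuclideanSpace ℝ (Fin n))
    (r : Fin m → ℝ) (hr : ∀ i, 0 < r i ∧ r i < 1)
    (hsim : ∀ i x y, dist (f i x) (f i y) = r i * dist x y)
    (A : Set (EuclideanSpace ℝ (Fin n))) (hAne : A.Nonempty) (hAcomp : IsCompact A)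
    (hself : A = ⋃ i, f i '' A)
    (hspan : ∀ (u y : EuclideanSpace ℝ (Fin n)), ‖u‖ = 1 →
      ¬ A ⊆ {x | ⟪u, x - y⟫ = 0}) :
    ∀ x ∈ A, ∀ u : EuclideanSpace ℝ (Fin n), ‖u‖ = 1 →
      ∃ δ > (0 : ℝ), ∀ ε > (0 : ℝ), ∃ b ∈ A, 0 < dist x b ∧ dist x b < ε ∧
        δ * dist x b ≤ Metric.infDist b {v | ⟪u, v - x⟫ = 0} :=
  stmt_2_general n m hm f r hr hsim A hAcomp hself hspan
end

section
/- With f₁, f₂ as above (eigenvalue parameters satisfying 0 < νᵢ ≤ λᵢ < 1, ν₁+ν₂ < 1, α = ν₂+λ₁−1, β = ν₁+λ₂−1), the attractor J = f₁(J) ∪ f₂(J) satisfies f₁(J) ∩ f₂(J) = {z}, where z = (ν₂, ν₁) = f₁(e₂) = f₂(e₁). -/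
/-!
In barycentric coordinates `(1 - x - y, x, y)` both maps are nonnegative column-stochastic
matrices with a row bounded away from zero, so they shrink the total negative part of the
coordinates by a factor `< 1`. Maximising that quantity over the compact set `J = f₁(J) ∪ f₂(J)`
gives `J ⊆ T`; minimising `1 - x` over `J` then shows that the fixed corner `e₁` of `f₁` lies in
`J`, and symmetrically `e₂ ∈ J`. Finally the functional `ν₁ x - ν₂ y` is `≥ 0` on `f₁(T)`,
`≤ 0` on `f₂(T)`, and on `f₁(T)` it vanishes only at `f₁(e₂) = z`.
-/

open Set Prod

theorem IsCompact.forall_nonpos_of_forall_exists_le_mul {X : Type*} [TopologicalSpace X]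
    {K : Set X} (hK : IsCompact K) {φ : X → ℝ} (hφ : ContinuousOn φ K) {δ : ℝ}
    (hδ₀ : 0 ≤ δ) (hδ₁ : δ < 1) (h : ∀ p ∈ K, ∃ q ∈ K, φ p ≤ δ * φ q) :
    ∀ p ∈ K, φ p ≤ 0 := by
  intro p hp
  obtain ⟨p₀, hp₀, hmax⟩ := hK.exists_isMaxOn ⟨p, hp⟩ hφ
  obtain ⟨q, hq, hp₀q⟩ := h p₀ hp₀
  have hp₀_le : φ p₀ ≤ δ * φ p₀ := hp₀q.trans (mul_le_mul_of_nonneg_left (hmax hq) hδ₀)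
  have hp_le : φ p ≤ φ p₀ := hmax hp
  nlinarith

theorem IsCompact.exists_nonpos_of_forall_exists_le_mul {X : Type*} [TopologicalSpace X]
    {K : Set X} (hK : IsCompact K) (hne : K.Nonempty) {φ : X → ℝ} (hφ : ContinuousOn φ K)
    {δ : ℝ} (hδ₁ : δ < 1) (h : ∀ q ∈ K, ∃ p ∈ K, φ p ≤ δ * φ q) :
    ∃ p ∈ K, φ p ≤ 0 := by
  obtain ⟨q₀, hq₀, hmin⟩ := hK.exists_isMinOn hne hφ
  obtain ⟨p, hp, hpq₀⟩ := h q₀ hq₀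
  have hq₀_le : φ q₀ ≤ φ p := hmin hp
  exact ⟨q₀, hq₀, by nlinarith⟩

lemma negPart_add_mul_le {u a b c x y z : ℝ} (hu : 0 ≤ u) (ha : 0 ≤ a) (hb : 0 ≤ b)
    (hc : 0 ≤ c) : (u + a * x + b * y + c * z)⁻ ≤ a * x⁻ + b * y⁻ + c * z⁻ := by
  rw [negPart_def]
  apply max_le
  · linarith [mul_le_mul_of_nonneg_left (neg_le_negPart x) ha,
      mul_le_mul_of_nonneg_left (neg_le_negPart y) hb,
      mul_le_mul_of_nonneg_left (neg_le_negPart z) hc]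
  · positivity

def triangle : Set (ℝ × ℝ) := {p | 0 ≤ p.1 ∧ 0 ≤ p.2 ∧ p.1 + p.2 ≤ 1}

lemma swap_mem_triangle {p : ℝ × ℝ} : p.swap ∈ triangle ↔ p ∈ triangle := by
  constructor <;> rintro ⟨h₁, h₂, h₃⟩ <;> exact ⟨h₂, h₁, by simpa [add_comm] using h₃⟩

def baryNegPart (p : ℝ × ℝ) : ℝ := (1 - p.1 - p.2)⁻ + p.1⁻ + p.2⁻

lemma baryNegPart_nonneg (p : ℝ × ℝ) : 0 ≤ baryNegPart p := by
  unfold baryNegPart; positivity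

lemma continuous_baryNegPart : Continuous baryNegPart := by
  unfold baryNegPart; fun_prop

lemma baryNegPart_swap (p : ℝ × ℝ) : baryNegPart p.swap = baryNegPart p := by
  simp only [baryNegPart, fst_swap, snd_swap, sub_right_comm _ p.2]
  ring

lemma mem_triangle_of_baryNegPart_nonpos {p : ℝ × ℝ} (h : baryNegPart p ≤ 0) :
    p ∈ triangle := by
  have h₀ := neg_le_negPart (1 - p.1 - p.2)
  have h₁ := neg_le_negPart p.1
  have h₂ := neg_le_negPart p.2
  unfold baryNegPart at h
  refine ⟨?_, ?_, ?_⟩ <;> linarith [negPart_nonneg p.1, negPart_nonneg p.2,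
    negPart_nonneg (1 - p.1 - p.2)]

/-- The map `f₁` of the statement, with `λ₁, ν₁, ν₂` renamed `l, n, m`; `f₂` is its conjugate
by `Prod.swap` with the roles of the indices exchanged. -/
def cornerMap (l n m : ℝ) (p : ℝ × ℝ) : ℝ × ℝ :=
  (l * p.1 + (m + l - 1) * p.2 + (1 - l), n * p.2)

section

variable {l n m : ℝ}

lemma cornerMap_zero_one : cornerMap l n m (0, 1) = (m, n) := by
  simp only [cornerMap]; ext <;> ring

lemma baryNegPart_cornerMap_le (hl₀ : 0 ≤ l) (hl₁ : l ≤ 1) (hn : 0 ≤ n) (hm : 0 ≤ m)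
    (hnm : n + m ≤ 1) (p : ℝ × ℝ) :
    baryNegPart (cornerMap l n m p) ≤ max l (1 - m) * baryNegPart p := by
  set s := 1 - max l (1 - m)
  have hs₀ : 0 ≤ s := by simp only [s, sub_nonneg, max_le_iff]; constructor <;> linarith
  have hsl : s ≤ 1 - l := by simp only [s]; linarith [le_max_left l (1 - m)]
  have hsm : s ≤ m := by simp only [s]; linarith [le_max_right l (1 - m)]
  set x₀ := 1 - p.1 - p.2
  -- `s` bounds the middle row of the barycentric matrix from below; subtracting
  -- `s * (x₀ + p.1 + p.2) = s` from that row leaves nonnegative coefficients, and every column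
  -- then sums to `1 - s`.
  have e₀ : 1 - (cornerMap l n m p).1 - (cornerMap l n m p).2
      = 0 + l * x₀ + 0 * p.1 + (1 - n - m) * p.2 := by simp only [cornerMap, x₀]; ring
  have e₁ : (cornerMap l n m p).1
      = s + (1 - l - s) * x₀ + (1 - s) * p.1 + (m - s) * p.2 := by
    simp only [cornerMap, x₀]; ring
  have e₂ : (cornerMap l n m p).2 = 0 + 0 * x₀ + 0 * p.1 + n * p.2 := by
    simp only [cornerMap]; ring
  have r₀ := negPart_add_mul_le (x := x₀) (y := p.1) (z := p.2) le_rfl hl₀ le_rfl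
    (by linarith : 0 ≤ 1 - n - m)
  have r₁ := negPart_add_mul_le (x := x₀) (y := p.1) (z := p.2) hs₀
    (by linarith : 0 ≤ 1 - l - s) (by linarith : 0 ≤ 1 - s) (by linarith : 0 ≤ m - s)
  have r₂ := negPart_add_mul_le (x := x₀) (y := p.1) (z := p.2) le_rfl le_rfl le_rfl hn
  unfold baryNegPart
  rw [e₀, e₁, e₂, show max l (1 - m) = 1 - s by simp only [s]; ring]
  linarith

lemma one_sub_cornerMap_fst_le {p : ℝ × ℝ} (hp : p ∈ triangle) :
    1 - (cornerMap l n m p).1 ≤ max l (1 - m) * (1 - p.1) := by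
  obtain ⟨-, hp₂, hp₁₂⟩ := hp
  have e : 1 - (cornerMap l n m p).1 = l * (1 - p.1 - p.2) + (1 - m) * p.2 := by
    simp only [cornerMap]; ring
  rw [e]
  have hx₀ : 0 ≤ 1 - p.1 - p.2 := by linarith
  linarith [mul_le_mul_of_nonneg_right (le_max_left l (1 - m)) hx₀,
    mul_le_mul_of_nonneg_right (le_max_right l (1 - m)) hp₂]

lemma mul_cornerMap_fst_sub_mul_snd (q : ℝ × ℝ) :
    n * (cornerMap l n m q).1 - m * (cornerMap l n m q).2
      = n * (l * q.1 + (1 - l) * (1 - q.2)) := by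
  simp only [cornerMap]; ring

end

lemma one_zero_mem_of_mapsTo_cornerMap {J : Set (ℝ × ℝ)} (hJc : IsCompact J)
    (hJne : J.Nonempty) (hJT : J ⊆ triangle) {l n m : ℝ} (hl : l < 1) (hm : 0 < m)
    (hmaps : MapsTo (cornerMap l n m) J J) : ((1 : ℝ), (0 : ℝ)) ∈ J := by
  obtain ⟨p, hp, hp₁⟩ := hJc.exists_nonpos_of_forall_exists_le_mul hJne
    (φ := fun p => 1 - p.1) (by fun_prop) (max_lt hl (by linarith))
    fun q hq => ⟨_, hmaps hq, one_sub_cornerMap_fst_le (hJT hq)⟩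
  obtain ⟨-, hp₂, hp₁₂⟩ := hJT hp
  obtain rfl : p = (1, 0) := Prod.ext (by linarith) (by linarith)
  exact hp

lemma subset_triangle_of_subset_image_union {J : Set (ℝ × ℝ)} (hJc : IsCompact J)
    {g₁ g₂ : ℝ × ℝ → ℝ × ℝ} {δ₁ δ₂ : ℝ} (hδ₁ : δ₁ < 1) (hδ₂ : δ₂ < 1)
    (hg₁ : ∀ p, baryNegPart (g₁ p) ≤ δ₁ * baryNegPart p)
    (hg₂ : ∀ p, baryNegPart (g₂ p) ≤ δ₂ * baryNegPart p)
    (hJ : J ⊆ g₁ '' J ∪ g₂ '' J) : J ⊆ triangle := by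
  set δ := max (max δ₁ δ₂) 0
  have hle {ε : ℝ} (h : ε ≤ max δ₁ δ₂) (p : ℝ × ℝ) :
      ε * baryNegPart p ≤ δ * baryNegPart p :=
    mul_le_mul_of_nonneg_right (h.trans (le_max_left _ _)) (baryNegPart_nonneg p)
  have hJ_nonpos := hJc.forall_nonpos_of_forall_exists_le_mul
    continuous_baryNegPart.continuousOn (le_max_right _ _) (max_lt (max_lt hδ₁ hδ₂) one_pos) ?_
  · exact fun p hp => mem_triangle_of_baryNegPart_nonpos (hJ_nonpos p hp)
  intro p hp
  rcases hJ hp with ⟨q, hq, rfl⟩ | ⟨q, hq, rfl⟩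
  · exact ⟨q, hq, (hg₁ q).trans (hle (le_max_left _ _) q)⟩
  · exact ⟨q, hq, (hg₂ q).trans (hle (le_max_right _ _) q)⟩

lemma eq_zero_one_of_cornerMap_eq_swap {l₁ n₁ l₂ n₂ : ℝ} (hn₁ : 0 < n₁) (hl₁ : 0 < l₁)
    (hl₁' : l₁ < 1) (hn₂ : 0 ≤ n₂) (hl₂ : 0 ≤ l₂) (hl₂' : l₂ ≤ 1) {q r : ℝ × ℝ}
    (hq : q ∈ triangle) (hr : r ∈ triangle)
    (h : cornerMap l₁ n₁ n₂ q = (cornerMap l₂ n₂ n₁ r.swap).swap) : q = (0, 1) := by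
  have e₁ := mul_cornerMap_fst_sub_mul_snd (l := l₁) (n := n₁) (m := n₂) q
  have e₂ := mul_cornerMap_fst_sub_mul_snd (l := l₂) (n := n₂) (m := n₁) r.swap
  rw [h] at e₁
  simp only [fst_swap, snd_swap] at e₁ e₂
  obtain ⟨hq₁, hq₂, hq₁₂⟩ := hq
  obtain ⟨hr₁, hr₂, hr₁₂⟩ := hr
  have hsum : n₁ * (l₁ * q.1 + (1 - l₁) * (1 - q.2))
      + n₂ * (l₂ * r.2 + (1 - l₂) * (1 - r.1)) = 0 := by
    linarith
  have hq0 : l₁ * q.1 + (1 - l₁) * (1 - q.2) ≤ 0 := by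
    nlinarith [mul_nonneg hn₂ (add_nonneg (mul_nonneg hl₂ hr₂)
      (mul_nonneg (by linarith : 0 ≤ 1 - l₂) (by linarith : 0 ≤ 1 - r.1)))]
  have hq₁0 : q.1 = 0 := by nlinarith
  exact Prod.ext hq₁0 (by nlinarith)

/-- Proposition 7 (single intersection point): the attractor `J = f₁(J) ∪ f₂(J)` of
the two affine maps determined by `(λ₁, ν₁, λ₂, ν₂)` satisfies
`f₁(J) ∩ f₂(J) = {z}` where `z = (ν₂, ν₁) = f₁(e₂) = f₂(e₁)`. -/
theorem stmt_5 (l1 l2 n1 n2 a b : ℝ)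
    (h1 : 0 < n1) (h1' : n1 ≤ l1) (h1'' : l1 < 1)
    (h2 : 0 < n2) (h2' : n2 ≤ l2) (h2'' : l2 < 1)
    (hsum : n1 + n2 < 1) (ha : a = n2 + l1 - 1) (hb : b = n1 + l2 - 1)
    (f1 f2 : ℝ × ℝ → ℝ × ℝ)
    (hf1 : ∀ p, f1 p = (l1 * p.1 + a * p.2 + (1 - l1), n1 * p.2))
    (hf2 : ∀ p, f2 p = (n2 * p.1, b * p.1 + l2 * p.2 + (1 - l2)))
    (J : Set (ℝ × ℝ)) (hJne : J.Nonempty) (hJc : IsCompact J)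
    (hJ : J = f1 '' J ∪ f2 '' J) :
    f1 '' J ∩ f2 '' J = {((n2, n1) : ℝ × ℝ)} := by
  subst ha hb
  obtain rfl : f1 = cornerMap l1 n1 n2 := funext fun p => by rw [hf1]; rfl
  obtain rfl : f2 = swap ∘ cornerMap l2 n2 n1 ∘ swap := funext fun p => by
    rw [hf2]
    simp only [Function.comp_apply, cornerMap, fst_swap, snd_swap, swap_prod_mk]
    ext <;> ring
  have hl1 : 0 < l1 := h1.trans_le h1'
  have hl2 : 0 < l2 := h2.trans_le h2'
  have hJT : J ⊆ triangle := subset_triangle_of_subset_image_union hJc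
    (max_lt h1'' (by linarith : 1 - n2 < 1)) (max_lt h2'' (by linarith : 1 - n1 < 1))
    (baryNegPart_cornerMap_le hl1.le h1''.le h1.le h2.le hsum.le)
    (fun p => by
      simpa only [Function.comp_apply, baryNegPart_swap] using
        baryNegPart_cornerMap_le hl2.le h2''.le h2.le h1.le (by linarith) p.swap)
    hJ.subset
  have he₁ : ((1 : ℝ), (0 : ℝ)) ∈ J := one_zero_mem_of_mapsTo_cornerMap hJc hJne hJT h1'' h2
    fun p hp => hJ.superset (Or.inl (mem_image_of_mem _ hp))
  have he₂ : ((0 : ℝ), (1 : ℝ)) ∈ J := by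
    simpa using one_zero_mem_of_mapsTo_cornerMap (n := n2) (hJc.image continuous_swap)
      (hJne.image _) (by rintro _ ⟨p, hp, rfl⟩; exact swap_mem_triangle.2 (hJT hp)) h2'' h1
      (by rintro _ ⟨p, hp, rfl⟩; exact ⟨_, hJ.superset (Or.inr (mem_image_of_mem _ hp)), by simp⟩)
  refine eq_singleton_iff_unique_mem.2 ⟨⟨⟨_, he₂, cornerMap_zero_one⟩,
    ⟨_, he₁, by simp [cornerMap_zero_one]⟩⟩, ?_⟩
  rintro x ⟨⟨q, hq, rfl⟩, ⟨r, hr, hqr⟩⟩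
  rw [eq_zero_one_of_cornerMap_eq_swap h1 hl1 h1'' h2.le hl2.le h2''.le (hJT hq) (hJT hr)
    hqr.symm, cornerMap_zero_one]
end
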